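/- In the setting of the percolating-flow tube D_j^+ with region D̃_j^+ and with η₀ = inf{η > 0 : ∫ k_j(ρ) T(ρ, ξ₀+η) dρ = θ₃ F_j} where θ₃ = θ₄ − (θ₄−θ₁)/3, there exists a constant C > 0 depending only on the constants in the coordinate bounds such that | (κ/(η₀ h_j)) ∫₀^{h_j} dδ ∫₀^{η₀} dα ∫_{c_j−δ}^{c_j+δ} dρ ω^{-1}(ρ, ξ₀+α) ∂T/∂ξ(ρ, ξ₀+α) | ≤ C [ f₀^{-1/2} (θ₄−θ₁)^{-1} min(θ₄−θ₁, ζ)^{-1} (κ/(v₀ h_j)) ∫_{D̃_j^+} ( (v₀²/κ) f(T) + κ|∇T|² ) dx dy + (θ₄−θ₁)^{-2} κ ∫_{D̃_j^+} |∇T|² dx dy ]. -/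

import Mathlib

set_option autoImplicit false

open MeasureTheory Real Filter Set

noncomputable section

/-- the averaging kernel `G(h,ξ) = max(1 - |ξ|/h, 0)`. -/
def kerG (h ξ : ℝ) : ℝ := max (1 - |ξ| / h) 0

/-- partial derivative in `ρ` of a function of `(ρ,ξ)`. -/
def qR (T : ℝ → ℝ → ℝ) (ρ ξ : ℝ) : ℝ := deriv (fun r => T r ξ) ρ
/-- partial derivative in `ξ`. -/
def qXi (T : ℝ → ℝ → ℝ) (ρ ξ : ℝ) : ℝ := deriv (fun s => T ρ s) ξ

/-- the function `ω = E₂/E₁`. -/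
def omg (Ea Eb : ℝ → ℝ → ℝ) (ρ ξ : ℝ) : ℝ := Eb ρ ξ / Ea ρ ξ

/-- `|∇T|²` expressed in the orthogonal coordinates `(ρ,ξ)` with metric
`dx² + dy² = E₁²dρ² + E₂²dξ²`. -/
def gradSq (T Ea Eb : ℝ → ℝ → ℝ) (ρ ξ : ℝ) : ℝ :=
  (qR T ρ ξ / Ea ρ ξ) ^ 2 + (qXi T ρ ξ / Eb ρ ξ) ^ 2

/-!
The averaged tangential derivative is at most `κ C₀ W / η₀`, where `W` is the integral of
`|∂_ξ T|` over the strip `[c - h, c + h] × [ξ₀, ξ₀ + η₀]`. Between `ξ₀` and `ξ₀ + η₀` the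
`k`-average of `T` drops by `(θ₄ - θ₁) F / 3`, while `F ≥ M h / 4` and `k ≤ M`; by the fundamental
theorem of calculus this forces `W ≥ (θ₄ - θ₁) h / 12`. Cauchy–Schwarz on the strip gives
`W² ≤ 2 h η₀ C₀ ∫ |∇T|²`, and dividing by the lower bound yields
`W ≤ 24 η₀ C₀ ∫ |∇T|² / (θ₄ - θ₁)`, so the gradient term alone controls the left-hand side.
-/

theorem sq_integral_le_measureReal_univ_mul {α : Type*} [MeasurableSpace α] {μ : Measure α}
    [IsFiniteMeasure μ] {g : α → ℝ} (hg : Integrable g μ)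
    (hg2 : Integrable (fun x => g x ^ 2) μ) :
    (∫ x, g x ∂μ) ^ 2 ≤ μ.real univ * ∫ x, g x ^ 2 ∂μ := by
  have hquad : ∀ t : ℝ,
      0 ≤ μ.real univ * (t * t) + (-2 * ∫ x, g x ∂μ) * t + ∫ x, g x ^ 2 ∂μ := by
    intro t
    have hexp : ∫ x, (t - g x) ^ 2 ∂μ
        = μ.real univ * (t * t) + (-2 * ∫ x, g x ∂μ) * t + ∫ x, g x ^ 2 ∂μ := by
      have hlin : Integrable (fun x => t * t + -2 * t * g x) μ :=
        (integrable_const _).add (hg.const_mul _)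
      simp_rw [show ∀ x, (t - g x) ^ 2 = t * t + -2 * t * g x + g x ^ 2 from fun x => by ring]
      rw [integral_add hlin hg2, integral_add (integrable_const _) (hg.const_mul _),
        integral_const, integral_const_mul, smul_eq_mul]
      ring
    exact hexp ▸ integral_nonneg fun x => sq_nonneg _
  have := discrim_le_zero hquad
  rw [discrim] at this
  nlinarith

theorem sq_setIntegral_le_measureReal_mul {α : Type*} [MeasurableSpace α] {μ : Measure α}
    {s : Set α} (hs : μ s ≠ ⊤) {g : α → ℝ} (hg : IntegrableOn g s μ)
    (hg2 : IntegrableOn (fun x => g x ^ 2) s μ) :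
    (∫ x in s, g x ∂μ) ^ 2 ≤ μ.real s * ∫ x in s, g x ^ 2 ∂μ := by
  have := isFiniteMeasure_restrict.mpr hs
  simpa only [measureReal_restrict_apply_univ] using sq_integral_le_measureReal_univ_mul hg hg2

theorem setIntegral_Icc_comp_const_add (g : ℝ → ℝ) (a b : ℝ) :
    ∫ x in Icc 0 b, g (a + x) = ∫ x in Icc a (a + b), g x := by
  have := (measurePreserving_add_left volume a).setIntegral_image_emb
    (measurableEmbedding_addLeft a) g (Icc 0 b)
  simpa [image_const_add_Icc, add_comm b] using this.symm

theorem abs_sub_le_setIntegral_abs_deriv {u u' : ℝ → ℝ} {a b : ℝ} (hab : a ≤ b)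
    (hu : ∀ x ∈ Icc a b, HasDerivAt u (u' x) x) (hu' : IntervalIntegrable u' volume a b) :
    |u a - u b| ≤ ∫ x in Icc a b, |u' x| := by
  rw [integral_Icc_eq_integral_Ioc, ← intervalIntegral.integral_of_le hab, abs_sub_comm,
    ← intervalIntegral.integral_eq_sub_of_hasDerivAt (by rwa [uIcc_of_le hab]) hu']
  exact intervalIntegral.abs_integral_le_integral_abs hab

theorem setIntegral_prod_eq_setIntegral_setIntegral_swap {f : ℝ → ℝ → ℝ} {s t : Set ℝ}
    (hf : IntegrableOn (fun p : ℝ × ℝ => f p.1 p.2) (s ×ˢ t)) :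
    ∫ p in s ×ˢ t, f p.1 p.2 = ∫ y in t, ∫ x in s, f x y := by
  rw [Measure.volume_eq_prod, setIntegral_prod (fun p : ℝ × ℝ => f p.1 p.2) hf]
  refine integral_integral_swap ?_
  rwa [Measure.prod_restrict, ← Measure.volume_eq_prod]

theorem volume_real_Icc_prod_Icc {a b a' b' : ℝ} (hab : a ≤ b) (hab' : a' ≤ b') :
    volume.real (Icc a b ×ˢ Icc a' b') = (b - a) * (b' - a') := by
  rw [measureReal_def, Measure.volume_eq_prod, Measure.prod_prod, ENNReal.toReal_mul,
    ← measureReal_def, ← measureReal_def, Real.volume_real_Icc_of_le hab,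
    Real.volume_real_Icc_of_le hab']

theorem le_div_of_sq_le_of_le {W a B : ℝ} (ha : 0 < a) (haW : a ≤ W) (hW : W ^ 2 ≤ B) :
    W ≤ B / a := by
  rw [le_div_iff₀ ha]
  nlinarith

theorem le_add_one_mul_add_of_le_mul {X A B C : ℝ} (hX : X ≤ C * B) (hA : 0 ≤ A) (hB : 0 ≤ B)
    (hC : 0 ≤ C) : X ≤ (C + 1) * (A + B) := by
  nlinarith

section HittingTime

variable {g : ℝ → ℝ} {a b y : ℝ}

theorem sInf_hitting_spec (hg : Continuous g) (hab : a ≤ b) (hy : y ∈ Icc (g b) (g a))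
    (hya : g a ≠ y) {η : ℝ} (hη : η = sInf {η | 0 < η ∧ g (a + η) = y}) :
    0 < η ∧ η ≤ b - a ∧ g (a + η) = y := by
  obtain ⟨x, hx, hgx⟩ := intermediate_value_Icc' hab hg.continuousOn hy
  have hxa : x - a ∈ {η | 0 < η ∧ g (a + η) = y} :=
    ⟨sub_pos.2 (hx.1.lt_of_ne (by rintro rfl; exact hya hgx)), by simpa using hgx⟩
  have hbdd : BddBelow {η | 0 < η ∧ g (a + η) = y} := ⟨0, fun _ h => h.1.le⟩
  have hclosed : IsClosed {η | g (a + η) = y} :=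
    isClosed_eq (hg.comp (continuous_const.add continuous_id)) continuous_const
  have hhit : g (a + η) = y :=
    hclosed.closure_subset_iff.2 (fun _ h => h.2) (hη ▸ csInf_mem_closure ⟨_, hxa⟩ hbdd)
  have hη0 : 0 ≤ η := hη ▸ Real.sInf_nonneg fun _ h => h.1.le
  refine ⟨hη0.lt_of_ne ?_, (hη ▸ csInf_le hbdd hxa).trans (by linarith [hx.2]), hhit⟩
  rintro rfl
  exact hya (by simpa using hhit)

theorem sInf_hitting_eq_zero (hab : a < b) (hg : ∀ x ∈ Icc a b, g x = y) :
    sInf {η | 0 < η ∧ g (a + η) = y} = 0 := by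
  refine le_antisymm (le_of_forall_pos_le_add fun ε hε => ?_) (Real.sInf_nonneg fun _ h => h.1.le)
  have hmem : min ε (b - a) ∈ {η | 0 < η ∧ g (a + η) = y} :=
    ⟨lt_min hε (by linarith), hg _ ⟨by linarith [lt_min hε (sub_pos.2 hab)],
      by linarith [min_le_right ε (b - a)]⟩⟩
  exact (csInf_le ⟨0, fun _ h => h.1.le⟩ hmem).trans (by simp)

end HittingTime

section WeightedAverage

variable {k : ℝ → ℝ} {s : Set ℝ} {T : ℝ → ℝ → ℝ} {B : ℝ}

theorem integrableOn_mul_of_norm_le (hk : IntegrableOn k s)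
    (hT : Continuous (fun p : ℝ × ℝ => T p.1 p.2)) (hB : ∀ ρ ξ, ‖T ρ ξ‖ ≤ B) (ξ : ℝ) :
    IntegrableOn (fun ρ => k ρ * T ρ ξ) s :=
  hk.mul_bdd (hT.comp (continuous_id.prodMk continuous_const)).aestronglyMeasurable
    (Eventually.of_forall fun ρ => hB ρ ξ)

theorem continuous_setIntegral_mul_of_norm_le (hk : IntegrableOn k s)
    (hT : Continuous (fun p : ℝ × ℝ => T p.1 p.2)) (hB : ∀ ρ ξ, ‖T ρ ξ‖ ≤ B) :
    Continuous fun ξ => ∫ ρ in s, k ρ * T ρ ξ :=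
  continuous_of_dominated (bound := fun ρ => ‖k ρ‖ * B)
    (fun ξ => (integrableOn_mul_of_norm_le hk hT hB ξ).aestronglyMeasurable)
    (fun ξ => Eventually.of_forall fun ρ => by
      rw [norm_mul]; exact mul_le_mul_of_nonneg_left (hB ρ ξ) (norm_nonneg _))
    (hk.norm.mul_const B)
    (Eventually.of_forall fun ρ =>
      continuous_const.mul (hT.comp (continuous_const.prodMk continuous_id)))

theorem setIntegral_mul_sub_le_mul {u v ψ : ℝ → ℝ} {M : ℝ} (hs : MeasurableSet s)
    (hk : ∀ x ∈ s, 0 ≤ k x ∧ k x ≤ M) (huv : ∀ x ∈ s, |u x - v x| ≤ ψ x)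
    (hku : IntegrableOn (fun x => k x * u x) s) (hkv : IntegrableOn (fun x => k x * v x) s)
    (hψ : IntegrableOn ψ s) :
    (∫ x in s, k x * u x) - ∫ x in s, k x * v x ≤ M * ∫ x in s, ψ x := by
  rw [← integral_sub hku hkv, ← integral_const_mul]
  refine setIntegral_mono_on (hku.sub hkv) (hψ.const_mul M) hs fun x hx => ?_
  obtain ⟨hk0, hkM⟩ := hk x hx
  calc k x * u x - k x * v x ≤ k x * |u x - v x| := by
        rw [← mul_sub]; exact mul_le_mul_of_nonneg_left (le_abs_self _) hk0
    _ ≤ M * ψ x := mul_le_mul hkM (huv x hx) (abs_nonneg _) (hk0.trans hkM)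

end WeightedAverage

theorem kerG_nonneg (h x : ℝ) : 0 ≤ kerG h x := le_max_right _ _

theorem kerG_le_one {h : ℝ} (hh : 0 ≤ h) (x : ℝ) : kerG h x ≤ 1 :=
  max_le (by linarith [div_nonneg (abs_nonneg x) hh]) zero_le_one

theorem one_half_le_kerG {h x : ℝ} (hh : 0 < h) (hx : |x| ≤ h / 2) : 1 / 2 ≤ kerG h x := by
  refine le_max_of_le_left ?_
  have : |x| / h ≤ 1 / 2 := by rw [div_le_iff₀ hh]; linarith
  linarith

theorem mul_div_four_le_setIntegral_kerG_mul {c h M : ℝ} {q : ℝ → ℝ} (hh : 0 < h) (hM : 0 ≤ M)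
    (hq : ∀ ρ ∈ Icc (c - h) (c + h), M / 2 ≤ q ρ)
    (hint : IntegrableOn (fun ρ => kerG h (ρ - c) * q ρ) (Icc (c - h) (c + h))) :
    M * h / 4 ≤ ∫ ρ in Icc (c - h) (c + h), kerG h (ρ - c) * q ρ := by
  have hsub : Icc (c - h / 2) (c + h / 2) ⊆ Icc (c - h) (c + h) :=
    Icc_subset_Icc (by linarith) (by linarith)
  calc M * h / 4 = ∫ _ in Icc (c - h / 2) (c + h / 2), M / 4 := by
        rw [setIntegral_const, Real.volume_real_Icc_of_le (by linarith), smul_eq_mul]; ring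
    _ ≤ ∫ ρ in Icc (c - h / 2) (c + h / 2), kerG h (ρ - c) * q ρ := by
        refine setIntegral_mono_on (integrableOn_const measure_Icc_lt_top.ne) (hint.mono_set hsub)
          measurableSet_Icc fun ρ hρ => ?_
        have hker : 1 / 2 ≤ kerG h (ρ - c) :=
          one_half_le_kerG hh (abs_le.2 ⟨by linarith [hρ.1], by linarith [hρ.2]⟩)
        nlinarith [hq ρ (hsub hρ)]
    _ ≤ ∫ ρ in Icc (c - h) (c + h), kerG h (ρ - c) * q ρ :=
        setIntegral_mono_set hint
          ((ae_restrict_mem measurableSet_Icc).mono fun ρ hρ =>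
            mul_nonneg (kerG_nonneg _ _) (by linarith [hq ρ hρ]))
          hsub.eventuallyLE

section Tube

variable {T Ea Eb : ℝ → ℝ → ℝ} {k q : ℝ → ℝ} {C0 c h κ θ1 θ4 ξ0 ξ1 F M η0 : ℝ}

theorem hasDerivAt_qXi (hT : Differentiable ℝ (fun p : ℝ × ℝ => T p.1 p.2)) (ρ ξ : ℝ) :
    HasDerivAt (fun s => T ρ s) (qXi T ρ ξ) ξ :=
  ((hT (ρ, ξ)).comp ξ ((differentiableAt_const ρ).prodMk differentiableAt_id)).hasDerivAt

theorem qXi_eq_fderiv (hT : Differentiable ℝ (fun p : ℝ × ℝ => T p.1 p.2)) (ρ ξ : ℝ) :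
    qXi T ρ ξ = fderiv ℝ (fun p : ℝ × ℝ => T p.1 p.2) (ρ, ξ) (0, 1) :=
  ((hT (ρ, ξ)).hasFDerivAt.comp_hasDerivAt ξ
    ((hasDerivAt_const ξ ρ).prodMk (hasDerivAt_id ξ))).deriv

theorem qR_eq_fderiv (hT : Differentiable ℝ (fun p : ℝ × ℝ => T p.1 p.2)) (ρ ξ : ℝ) :
    qR T ρ ξ = fderiv ℝ (fun p : ℝ × ℝ => T p.1 p.2) (ρ, ξ) (1, 0) :=
  (HasFDerivAt.comp_hasDerivAt (l := fun p : ℝ × ℝ => T p.1 p.2) ρ (hT (ρ, ξ)).hasFDerivAt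
    ((hasDerivAt_id' ρ).prodMk (hasDerivAt_const ρ ξ))).deriv

theorem continuous_qXi (hT : ContDiff ℝ 1 (fun p : ℝ × ℝ => T p.1 p.2)) :
    Continuous (fun p : ℝ × ℝ => qXi T p.1 p.2) := by
  simp_rw [qXi_eq_fderiv (hT.differentiable one_ne_zero)]
  exact (hT.continuous_fderiv one_ne_zero).clm_apply continuous_const

theorem continuous_qR (hT : ContDiff ℝ 1 (fun p : ℝ × ℝ => T p.1 p.2)) :
    Continuous (fun p : ℝ × ℝ => qR T p.1 p.2) := by
  simp_rw [qR_eq_fderiv (hT.differentiable one_ne_zero)]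
  exact (hT.continuous_fderiv one_ne_zero).clm_apply continuous_const

theorem mul_mul_gradSq_nonneg {ρ ξ : ℝ} (hEa : 0 ≤ Ea ρ ξ) (hEb : 0 ≤ Eb ρ ξ) :
    0 ≤ Ea ρ ξ * Eb ρ ξ * gradSq T Ea Eb ρ ξ :=
  mul_nonneg (mul_nonneg hEa hEb) (add_nonneg (sq_nonneg _) (sq_nonneg _))

theorem integral_setIntegral_mul_mul_gradSq_nonneg {s t : Set ℝ} (hs : MeasurableSet s)
    (hE : ∀ ρ ∈ s, ∀ ξ, 0 < Ea ρ ξ ∧ 0 < Eb ρ ξ) :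
    0 ≤ ∫ ξ in t, ∫ ρ in s, Ea ρ ξ * Eb ρ ξ * gradSq T Ea Eb ρ ξ :=
  integral_nonneg fun ξ => setIntegral_nonneg hs fun ρ hρ =>
    mul_mul_gradSq_nonneg (hE ρ hρ ξ).1.le (hE ρ hρ ξ).2.le

theorem sq_qXi_le_mul_gradSq {ρ ξ : ℝ} (hEa : 0 < Ea ρ ξ) (hEb : 0 < Eb ρ ξ)
    (hω : omg Ea Eb ρ ξ ≤ C0) :
    qXi T ρ ξ ^ 2 ≤ C0 * (Ea ρ ξ * Eb ρ ξ * gradSq T Ea Eb ρ ξ) := by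
  rw [omg, div_le_iff₀ hEa] at hω
  have hξpart : qXi T ρ ξ ^ 2 ≤ C0 * (Ea ρ ξ * Eb ρ ξ * (qXi T ρ ξ / Eb ρ ξ) ^ 2) := by
    have hratio : 1 ≤ C0 * Ea ρ ξ / Eb ρ ξ := by rw [le_div_iff₀ hEb]; linarith
    have hrw : C0 * (Ea ρ ξ * Eb ρ ξ * (qXi T ρ ξ / Eb ρ ξ) ^ 2)
        = C0 * Ea ρ ξ / Eb ρ ξ * qXi T ρ ξ ^ 2 := by field_simp
    rw [hrw]
    nlinarith [sq_nonneg (qXi T ρ ξ)]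
  have hρpart : 0 ≤ C0 * (Ea ρ ξ * Eb ρ ξ * (qR T ρ ξ / Ea ρ ξ) ^ 2) := by
    have hC0 : 0 ≤ C0 := by nlinarith
    positivity
  rw [gradSq]
  linarith [show C0 * (Ea ρ ξ * Eb ρ ξ * ((qR T ρ ξ / Ea ρ ξ) ^ 2 + (qXi T ρ ξ / Eb ρ ξ) ^ 2))
    = C0 * (Ea ρ ξ * Eb ρ ξ * (qR T ρ ξ / Ea ρ ξ) ^ 2)
      + C0 * (Ea ρ ξ * Eb ρ ξ * (qXi T ρ ξ / Eb ρ ξ) ^ 2) by ring]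

theorem continuousOn_mul_mul_gradSq (hT : ContDiff ℝ 1 (fun p : ℝ × ℝ => T p.1 p.2))
    (hEa : Continuous (fun p : ℝ × ℝ => Ea p.1 p.2))
    (hEb : Continuous (fun p : ℝ × ℝ => Eb p.1 p.2)) {s : Set (ℝ × ℝ)}
    (hs : ∀ p ∈ s, Ea p.1 p.2 ≠ 0 ∧ Eb p.1 p.2 ≠ 0) :
    ContinuousOn (fun p : ℝ × ℝ => Ea p.1 p.2 * Eb p.1 p.2 * gradSq T Ea Eb p.1 p.2) s :=
  (hEa.continuousOn.mul hEb.continuousOn).mul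
    ((((continuous_qR hT).continuousOn.div hEa.continuousOn fun p hp => (hs p hp).1).pow 2).add
      (((continuous_qXi hT).continuousOn.div hEb.continuousOn fun p hp => (hs p hp).2).pow 2))

theorem abs_inv_omg_le (hC0 : 0 < C0) {ρ ξ : ℝ} (hω : C0⁻¹ ≤ omg Ea Eb ρ ξ) :
    |(omg Ea Eb ρ ξ)⁻¹| ≤ C0 := by
  have hpos := (inv_pos.2 hC0).trans_le hω
  rw [abs_of_pos (inv_pos.2 hpos)]
  simpa using inv_anti₀ (inv_pos.2 hC0) hω

theorem setIntegral_mul_sub_le_mul_setIntegral_abs_qXi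
    (hT : ContDiff ℝ 1 (fun p : ℝ × ℝ => T p.1 p.2)) {k : ℝ → ℝ} {s : Set ℝ} (hs : IsCompact s)
    {M a b : ℝ} (hab : a ≤ b) (hk : ∀ ρ ∈ s, 0 ≤ k ρ ∧ k ρ ≤ M)
    (hkT : ∀ ξ, IntegrableOn (fun ρ => k ρ * T ρ ξ) s) :
    (∫ ρ in s, k ρ * T ρ a) - ∫ ρ in s, k ρ * T ρ b ≤
      M * ∫ p in s ×ˢ Icc a b, |qXi T p.1 p.2| := by
  have hq := continuous_qXi hT
  rw [Measure.volume_eq_prod, setIntegral_prod _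
    (hq.abs.continuousOn.integrableOn_compact (hs.prod isCompact_Icc))]
  refine setIntegral_mul_sub_le_mul hs.measurableSet hk (fun ρ _ => ?_) (hkT a) (hkT b)
    ((continuous_parametric_integral_of_continuous (f := fun ρ ξ => |qXi T ρ ξ|) hq.abs
      isCompact_Icc).continuousOn.integrableOn_compact hs)
  exact abs_sub_le_setIntegral_abs_deriv hab
    (fun ξ _ => hasDerivAt_qXi (hT.differentiable one_ne_zero) ρ ξ)
    ((hq.comp (continuous_const.prodMk continuous_id)).intervalIntegrable a b)

theorem setIntegral_sq_qXi_le (hT : ContDiff ℝ 1 (fun p : ℝ × ℝ => T p.1 p.2))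
    (hEa : Continuous (fun p : ℝ × ℝ => Ea p.1 p.2))
    (hEb : Continuous (fun p : ℝ × ℝ => Eb p.1 p.2))
    (hE : ∀ ρ ∈ Icc (c - h) (c + h), ∀ ξ, 0 < Ea ρ ξ ∧ 0 < Eb ρ ξ)
    (hω : ∀ ρ ∈ Icc (c - h) (c + h), ∀ ξ, omg Ea Eb ρ ξ ≤ C0) (hC0 : 0 ≤ C0)
    {a b b' : ℝ} (hbb' : b ≤ b') :
    ∫ p in Icc (c - h) (c + h) ×ˢ Icc a b, qXi T p.1 p.2 ^ 2 ≤
      C0 * ∫ ξ in Icc a b', ∫ ρ in Icc (c - h) (c + h), Ea ρ ξ * Eb ρ ξ * gradSq T Ea Eb ρ ξ := by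
  have hEint : IntegrableOn (fun p : ℝ × ℝ => Ea p.1 p.2 * Eb p.1 p.2 * gradSq T Ea Eb p.1 p.2)
      (Icc (c - h) (c + h) ×ˢ Icc a b') :=
    (continuousOn_mul_mul_gradSq hT hEa hEb fun p hp =>
      ⟨(hE p.1 hp.1 p.2).1.ne', (hE p.1 hp.1 p.2).2.ne'⟩).integrableOn_compact
      (isCompact_Icc.prod isCompact_Icc)
  have hCEint : IntegrableOn _ (Icc (c - h) (c + h) ×ˢ Icc a b') := hEint.const_mul C0
  have hsub : Icc (c - h) (c + h) ×ˢ Icc a b ⊆ Icc (c - h) (c + h) ×ˢ Icc a b' :=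
    prod_mono le_rfl (Icc_subset_Icc le_rfl hbb')
  rw [← setIntegral_prod_eq_setIntegral_setIntegral_swap
    (f := fun ρ ξ => Ea ρ ξ * Eb ρ ξ * gradSq T Ea Eb ρ ξ) hEint, ← integral_const_mul]
  refine (setIntegral_mono_on
    (((continuous_qXi hT).pow 2).continuousOn.integrableOn_compact
      (isCompact_Icc.prod isCompact_Icc))
    (hCEint.mono_set hsub) (measurableSet_Icc.prod measurableSet_Icc) fun p hp =>
      sq_qXi_le_mul_gradSq (hE p.1 hp.1 p.2).1 (hE p.1 hp.1 p.2).2 (hω p.1 hp.1 p.2)).trans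
    (setIntegral_mono_set hCEint ?_ hsub.eventuallyLE)
  refine (ae_restrict_mem (measurableSet_Icc.prod measurableSet_Icc)).mono fun p hp => ?_
  exact mul_nonneg hC0 (mul_mul_gradSq_nonneg (hE p.1 hp.1 p.2).1.le (hE p.1 hp.1 p.2).2.le)

theorem sq_setIntegral_abs_qXi_le (hT : ContDiff ℝ 1 (fun p : ℝ × ℝ => T p.1 p.2))
    (hEa : Continuous (fun p : ℝ × ℝ => Ea p.1 p.2))
    (hEb : Continuous (fun p : ℝ × ℝ => Eb p.1 p.2))
    (hE : ∀ ρ ∈ Icc (c - h) (c + h), ∀ ξ, 0 < Ea ρ ξ ∧ 0 < Eb ρ ξ)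
    (hω : ∀ ρ ∈ Icc (c - h) (c + h), ∀ ξ, omg Ea Eb ρ ξ ≤ C0) (hC0 : 0 ≤ C0) (hh : 0 ≤ h)
    {a b b' : ℝ} (hab : a ≤ b) (hbb' : b ≤ b') :
    (∫ p in Icc (c - h) (c + h) ×ˢ Icc a b, |qXi T p.1 p.2|) ^ 2 ≤
      2 * h * (b - a) * (C0 * ∫ ξ in Icc a b', ∫ ρ in Icc (c - h) (c + h),
        Ea ρ ξ * Eb ρ ξ * gradSq T Ea Eb ρ ξ) := by
  have hq := (continuous_qXi hT).abs
  have hR : IsCompact (Icc (c - h) (c + h) ×ˢ Icc a b) := isCompact_Icc.prod isCompact_Icc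
  calc (∫ p in Icc (c - h) (c + h) ×ˢ Icc a b, |qXi T p.1 p.2|) ^ 2
      ≤ volume.real (Icc (c - h) (c + h) ×ˢ Icc a b) *
          ∫ p in Icc (c - h) (c + h) ×ˢ Icc a b, |qXi T p.1 p.2| ^ 2 :=
        sq_setIntegral_le_measureReal_mul hR.measure_lt_top.ne
          (hq.continuousOn.integrableOn_compact hR)
          ((hq.pow 2).continuousOn.integrableOn_compact hR)
    _ = 2 * h * (b - a) * ∫ p in Icc (c - h) (c + h) ×ˢ Icc a b, qXi T p.1 p.2 ^ 2 := by
        simp_rw [volume_real_Icc_prod_Icc (by linarith : c - h ≤ c + h) hab, sq_abs]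
        ring
    _ ≤ _ := mul_le_mul_of_nonneg_left (setIntegral_sq_qXi_le hT hEa hEb hE hω hC0 hbb')
        (by nlinarith)

theorem abs_setIntegral_inv_omg_mul_qXi_le (hT : ContDiff ℝ 1 (fun p : ℝ × ℝ => T p.1 p.2))
    (hC0 : 0 < C0) (hω : ∀ ρ ∈ Icc (c - h) (c + h), ∀ ξ, C0⁻¹ ≤ omg Ea Eb ρ ξ) (hh : 0 ≤ h)
    (ξ0 η : ℝ) :
    |∫ δ in Icc (0 : ℝ) h, ∫ α in Icc (0 : ℝ) η, ∫ ρ in Icc (c - δ) (c + δ),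
        (omg Ea Eb ρ (ξ0 + α))⁻¹ * qXi T ρ (ξ0 + α)| ≤
      h * (C0 * ∫ p in Icc (c - h) (c + h) ×ˢ Icc ξ0 (ξ0 + η), |qXi T p.1 p.2|) := by
  have hq := continuous_qXi hT
  set φ := fun ξ => ∫ ρ in Icc (c - h) (c + h), |qXi T ρ ξ|
  have hφ : Continuous φ :=
    continuous_parametric_integral_of_continuous (f := fun ξ ρ => |qXi T ρ ξ|)
      (hq.comp continuous_swap).abs isCompact_Icc
  have hinner : ∀ δ ∈ Icc 0 h, ∀ α, ‖∫ ρ in Icc (c - δ) (c + δ),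
      (omg Ea Eb ρ (ξ0 + α))⁻¹ * qXi T ρ (ξ0 + α)‖ ≤ C0 * φ (ξ0 + α) := by
    intro δ hδ α
    have hsub : Icc (c - δ) (c + δ) ⊆ Icc (c - h) (c + h) :=
      Icc_subset_Icc (by linarith [hδ.2]) (by linarith [hδ.2])
    have hint : IntegrableOn (fun ρ => C0 * |qXi T ρ (ξ0 + α)|) (Icc (c - h) (c + h)) :=
      (continuous_const.mul (hq.comp (continuous_id.prodMk continuous_const)).abs).integrableOn_Icc
    calc _ ≤ ∫ ρ in Icc (c - δ) (c + δ), C0 * |qXi T ρ (ξ0 + α)| := by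
          refine norm_integral_le_of_norm_le (hint.mono_set hsub)
            ((ae_restrict_mem measurableSet_Icc).mono fun ρ hρ => ?_)
          rw [norm_mul, Real.norm_eq_abs, Real.norm_eq_abs]
          exact mul_le_mul_of_nonneg_right (abs_inv_omg_le hC0 (hω ρ (hsub hρ) _)) (abs_nonneg _)
      _ ≤ ∫ ρ in Icc (c - h) (c + h), C0 * |qXi T ρ (ξ0 + α)| :=
          setIntegral_mono_set hint (Eventually.of_forall fun ρ => by positivity)
            hsub.eventuallyLE
      _ = C0 * φ (ξ0 + α) := integral_const_mul _ _
  have hmiddle : ∀ δ ∈ Icc 0 h, ‖∫ α in Icc (0 : ℝ) η, ∫ ρ in Icc (c - δ) (c + δ),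
      (omg Ea Eb ρ (ξ0 + α))⁻¹ * qXi T ρ (ξ0 + α)‖ ≤ C0 * ∫ α in Icc (0 : ℝ) η, φ (ξ0 + α) := by
    intro δ hδ
    rw [← integral_const_mul]
    exact norm_integral_le_of_norm_le
      (continuous_const.mul (hφ.comp (continuous_const.add continuous_id))).integrableOn_Icc
      (Eventually.of_forall (hinner δ hδ))
  rw [← Real.norm_eq_abs]
  refine (norm_setIntegral_le_of_norm_le_const measure_Icc_lt_top hmiddle).trans_eq ?_
  rw [Real.volume_real_Icc_of_le hh, setIntegral_Icc_comp_const_add φ,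
    setIntegral_prod_eq_setIntegral_setIntegral_swap (f := fun ρ ξ => |qXi T ρ ξ|)
      (hq.abs.continuousOn.integrableOn_compact (isCompact_Icc.prod isCompact_Icc))]
  ring

theorem div_four_mul_le_setIntegral_abs_qXi (hT : ContDiff ℝ 1 (fun p : ℝ × ℝ => T p.1 p.2))
    (hT1 : ∀ ρ ξ, ‖T ρ ξ‖ ≤ 1) (hh : 0 < h) (hM : 0 < M)
    (hq : ∀ ρ ∈ Icc (c - h) (c + h), M / 2 ≤ q ρ ∧ q ρ ≤ M)
    (hk : ∀ ρ, k ρ = kerG h (ρ - c) * q ρ) (hkint : IntegrableOn k (Icc (c - h) (c + h)))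
    (hF : F = ∫ ρ in Icc (c - h) (c + h), k ρ) {a b d : ℝ} (hab : a ≤ b) (hd : 0 ≤ d)
    (hdrop : d * F ≤
      (∫ ρ in Icc (c - h) (c + h), k ρ * T ρ a) - ∫ ρ in Icc (c - h) (c + h), k ρ * T ρ b) :
    d * h / 4 ≤ ∫ p in Icc (c - h) (c + h) ×ˢ Icc a b, |qXi T p.1 p.2| := by
  have hkM : ∀ ρ ∈ Icc (c - h) (c + h), 0 ≤ k ρ ∧ k ρ ≤ M := fun ρ hρ => by
    rw [hk]
    have := hq ρ hρ
    exact ⟨mul_nonneg (kerG_nonneg _ _) (by linarith),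
      by nlinarith [kerG_nonneg h (ρ - c), kerG_le_one hh.le (ρ - c)]⟩
  have hkq : k = fun ρ => kerG h (ρ - c) * q ρ := funext hk
  have hmass : M * h / 4 ≤ F := by
    rw [hF, hkq]
    exact mul_div_four_le_setIntegral_kerG_mul hh hM.le (fun ρ hρ => (hq ρ hρ).1) (hkq ▸ hkint)
  have hW := setIntegral_mul_sub_le_mul_setIntegral_abs_qXi hT isCompact_Icc hab hkM
    (integrableOn_mul_of_norm_le hkint hT.continuous hT1)
  refine le_of_mul_le_mul_left ?_ hM
  nlinarith

theorem tangential_bound_of_pos_mass (hT : ContDiff ℝ 1 (fun p : ℝ × ℝ => T p.1 p.2))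
    (hT01 : ∀ ρ ξ, T ρ ξ ∈ Icc (0 : ℝ) 1)
    (hEa : Continuous (fun p : ℝ × ℝ => Ea p.1 p.2))
    (hEb : Continuous (fun p : ℝ × ℝ => Eb p.1 p.2))
    (hE : ∀ ρ ∈ Icc (c - h) (c + h), ∀ ξ, 0 < Ea ρ ξ ∧ 0 < Eb ρ ξ)
    (hω : ∀ ρ ∈ Icc (c - h) (c + h), ∀ ξ, C0⁻¹ ≤ omg Ea Eb ρ ξ ∧ omg Ea Eb ρ ξ ≤ C0)
    (hC0 : 0 < C0) (hκ : 0 ≤ κ) (hh : 0 < h) (hθ : θ1 < θ4) (hθle : θ4 - θ1 ≤ 1) (hM : 0 < M)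
    (hq : ∀ ρ ∈ Icc (c - h) (c + h), M / 2 ≤ q ρ ∧ q ρ ≤ M)
    (hk : ∀ ρ, k ρ = kerG h (ρ - c) * q ρ) (hF : F = ∫ ρ in Icc (c - h) (c + h), k ρ)
    (hFpos : 0 < F) (hξ : ξ0 < ξ1)
    (h0 : ∫ ρ in Icc (c - h) (c + h), k ρ * T ρ ξ0 = θ4 * F)
    (h1 : ∫ ρ in Icc (c - h) (c + h), k ρ * T ρ ξ1 = θ1 * F)
    (hη0 : η0 = sInf {η : ℝ | 0 < η ∧ (∫ ρ in Icc (c - h) (c + h),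
        k ρ * T ρ (ξ0 + η)) = (θ4 - (θ4 - θ1) / 3) * F}) :
    κ / (η0 * h) * |∫ δ in Icc (0 : ℝ) h, ∫ α in Icc (0 : ℝ) η0, ∫ ρ in Icc (c - δ) (c + δ),
        (omg Ea Eb ρ (ξ0 + α))⁻¹ * qXi T ρ (ξ0 + α)| ≤
      24 * C0 ^ 2 * (((θ4 - θ1) ^ 2)⁻¹ * κ * ∫ ξ in Icc ξ0 ξ1, ∫ ρ in Icc (c - h) (c + h),
        Ea ρ ξ * Eb ρ ξ * gradSq T Ea Eb ρ ξ) := by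
  have hkint : IntegrableOn k (Icc (c - h) (c + h)) := by
    by_contra hk'
    rw [integral_undef hk'] at hF
    linarith
  have hT1 : ∀ ρ ξ, ‖T ρ ξ‖ ≤ 1 := fun ρ ξ => by
    rw [Real.norm_eq_abs, abs_le]
    exact ⟨by linarith [(hT01 ρ ξ).1], (hT01 ρ ξ).2⟩
  obtain ⟨hη, hηξ, hhit⟩ := sInf_hitting_spec
    (continuous_setIntegral_mul_of_norm_le hkint hT.continuous hT1) hξ.le
    ⟨by rw [h1]; nlinarith, by rw [h0]; nlinarith⟩ (by rw [h0]; nlinarith) hη0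
  have hξη : ξ0 ≤ ξ0 + η0 := by linarith
  set W := ∫ p in Icc (c - h) (c + h) ×ˢ Icc ξ0 (ξ0 + η0), |qXi T p.1 p.2|
  set G := ∫ ξ in Icc ξ0 ξ1, ∫ ρ in Icc (c - h) (c + h), Ea ρ ξ * Eb ρ ξ * gradSq T Ea Eb ρ ξ
  have hWlow : (θ4 - θ1) / 3 * h / 4 ≤ W :=
    div_four_mul_le_setIntegral_abs_qXi hT hT1 hh hM hq hk hkint hF hξη (by linarith)
      (by rw [h0, hhit]; linarith)
  have hWup := le_div_of_sq_le_of_le (by positivity) hWlow (sq_setIntegral_abs_qXi_le hT hEa hEb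
    hE (fun ρ hρ ξ => (hω ρ hρ ξ).2) hC0.le hh.le hξη (show ξ0 + η0 ≤ ξ1 by linarith))
  rw [add_sub_cancel_left] at hWup
  have hG : 0 ≤ G := integral_setIntegral_mul_mul_gradSq_nonneg measurableSet_Icc hE
  have hθinv : (θ4 - θ1)⁻¹ ≤ ((θ4 - θ1) ^ 2)⁻¹ := inv_anti₀ (by nlinarith) (by nlinarith)
  calc _ ≤ κ / (η0 * h) * (h * (C0 * W)) := by
        gcongr
        exact abs_setIntegral_inv_omg_mul_qXi_le hT hC0 (fun ρ hρ ξ => (hω ρ hρ ξ).1) hh.le ξ0 η0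
    _ ≤ κ / (η0 * h) * (h * (C0 * (2 * h * η0 * (C0 * G) / ((θ4 - θ1) / 3 * h / 4)))) := by
        gcongr
    _ = 24 * C0 ^ 2 * ((θ4 - θ1)⁻¹ * κ * G) := by
        field_simp
        ring
    _ ≤ 24 * C0 ^ 2 * (((θ4 - θ1) ^ 2)⁻¹ * κ * G) := by
        gcongr

theorem tangential_bound_by_energy (hT : ContDiff ℝ 1 (fun p : ℝ × ℝ => T p.1 p.2))
    (hT01 : ∀ ρ ξ, T ρ ξ ∈ Icc (0 : ℝ) 1)
    (hEa : Continuous (fun p : ℝ × ℝ => Ea p.1 p.2))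
    (hEb : Continuous (fun p : ℝ × ℝ => Eb p.1 p.2))
    (hE : ∀ ρ ∈ Icc (c - h) (c + h), ∀ ξ, 0 < Ea ρ ξ ∧ 0 < Eb ρ ξ)
    (hω : ∀ ρ ∈ Icc (c - h) (c + h), ∀ ξ, C0⁻¹ ≤ omg Ea Eb ρ ξ ∧ omg Ea Eb ρ ξ ≤ C0)
    (hC0 : 0 < C0) (hκ : 0 ≤ κ) (hh : 0 < h) (hθ : θ1 < θ4) (hθle : θ4 - θ1 ≤ 1) (hM : 0 < M)
    (hq : ∀ ρ ∈ Icc (c - h) (c + h), M / 2 ≤ q ρ ∧ q ρ ≤ M)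
    (hk : ∀ ρ, k ρ = kerG h (ρ - c) * q ρ) (hF : F = ∫ ρ in Icc (c - h) (c + h), k ρ)
    (hξ : ξ0 < ξ1)
    (h0 : ∫ ρ in Icc (c - h) (c + h), k ρ * T ρ ξ0 = θ4 * F)
    (h1 : ∫ ρ in Icc (c - h) (c + h), k ρ * T ρ ξ1 = θ1 * F)
    (hbr : ∀ ξ ∈ Icc ξ0 ξ1, θ1 * F ≤ (∫ ρ in Icc (c - h) (c + h), k ρ * T ρ ξ) ∧
        (∫ ρ in Icc (c - h) (c + h), k ρ * T ρ ξ) ≤ θ4 * F)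
    (hη0 : η0 = sInf {η : ℝ | 0 < η ∧ (∫ ρ in Icc (c - h) (c + h),
        k ρ * T ρ (ξ0 + η)) = (θ4 - (θ4 - θ1) / 3) * F}) :
    κ / (η0 * h) * |∫ δ in Icc (0 : ℝ) h, ∫ α in Icc (0 : ℝ) η0, ∫ ρ in Icc (c - δ) (c + δ),
        (omg Ea Eb ρ (ξ0 + α))⁻¹ * qXi T ρ (ξ0 + α)| ≤
      24 * C0 ^ 2 * (((θ4 - θ1) ^ 2)⁻¹ * κ * ∫ ξ in Icc ξ0 ξ1, ∫ ρ in Icc (c - h) (c + h),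
        Ea ρ ξ * Eb ρ ξ * gradSq T Ea Eb ρ ξ) := by
  have hF0 : 0 ≤ F := by
    have := (hbr ξ0 ⟨le_rfl, hξ.le⟩).1
    rw [h0] at this
    nlinarith
  rcases hF0.eq_or_lt with hF0 | hFpos
  -- `F = 0` only happens for non-integrable `k`; then `η₀ = 0` and `κ / (η₀ h) = 0`.
  · have hη0 : η0 = 0 := by
      rw [hη0, ← hF0]
      refine sInf_hitting_eq_zero (g := fun ξ => ∫ ρ in Icc (c - h) (c + h), k ρ * T ρ ξ) hξ
        fun ξ hξ' => ?_
      have := hbr ξ hξ'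
      simp only [← hF0, mul_zero] at this ⊢
      exact le_antisymm this.2 this.1
    rw [hη0, zero_mul, div_zero, zero_mul]
    have hG := integral_setIntegral_mul_mul_gradSq_nonneg (T := T) (t := Icc ξ0 ξ1)
      measurableSet_Icc hE
    positivity
  · exact tangential_bound_of_pos_mass hT hT01 hEa hEb hE hω hC0 hκ hh hθ hθle hM hq hk hF hFpos
      hξ h0 h1 hη0

end Tube

/-- Lemma 5: bound on the doubly averaged tangential derivative
near the cross-section `ξ₀` by integrals of `f(T)` and `|∇T|²` over `D̃_j⁺`. -/
theorem tube_tangential_derivative_bound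
    (C0 : ℝ) (hC0 : 0 < C0) :
    ∃ C > 0, ∀ (f : ℝ → ℝ) (θ1 θ4 f0 ζ κ v0 c h ξ0 ξ1 F M : ℝ)
      (Ea Eb : ℝ → ℝ → ℝ) (q k : ℝ → ℝ) (T : ℝ → ℝ → ℝ),
      0 < κ → 0 < v0 → 0 < h →
      0 < θ1 → θ1 < θ4 → θ4 < 1 → 0 < f0 → 0 < ζ → ζ ≤ 1 / 2 →
      -- the nonlinearity
      ContDiffOn ℝ 1 f (Icc 0 1) →
      f 0 = 0 → f 1 = 0 →
      (∀ s ∈ Icc (0 : ℝ) 1, 0 ≤ f s) →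
      (∀ θ ∈ Ioo (θ1 - ζ) (θ4 + ζ), f0 < f θ) →
      -- the function T on the tube, values in [0,1]
      ContDiff ℝ 2 (fun p : ℝ × ℝ => T p.1 p.2) →
      (∀ ρ ξ : ℝ, T ρ ξ ∈ Icc (0 : ℝ) 1) →
      -- the metric coefficients of the coordinates
      ContDiff ℝ 1 (fun p : ℝ × ℝ => Ea p.1 p.2) →
      ContDiff ℝ 1 (fun p : ℝ × ℝ => Eb p.1 p.2) →
      (∀ ρ ∈ Icc (c - h) (c + h), ∀ ξ : ℝ, C0⁻¹ ≤ Ea ρ ξ ∧ C0⁻¹ ≤ Eb ρ ξ) →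
      (∀ ρ ∈ Icc (c - h) (c + h), ∀ ξ : ℝ,
        C0⁻¹ ≤ omg Ea Eb ρ ξ ∧ omg Ea Eb ρ ξ ≤ C0) →
      (∀ ρ ∈ Icc (c - h) (c + h), ∀ ξ : ℝ,
        |deriv (fun s => omg Ea Eb ρ s) ξ| ≤ C0 / h ∧
        |deriv (fun r => omg Ea Eb r ξ) ρ| ≤ C0 / h) →
      -- the weight k_j(ρ) = G(h_j, ρ - c_j)·E₁|u|, with E₁|u| non-oscillating
      0 < M →
      (∀ ρ ∈ Icc (c - h) (c + h), M / 2 ≤ q ρ ∧ q ρ ≤ M) →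
      (∀ ρ : ℝ, k ρ = kerG h (ρ - c) * q ρ) →
      F = (∫ ρ in Icc (c - h) (c + h), k ρ) →
      -- the cross-sections ξ₀ < ξ₁
      ξ0 < ξ1 →
      (∫ ρ in Icc (c - h) (c + h), k ρ * T ρ ξ0) = θ4 * F →
      (∫ ρ in Icc (c - h) (c + h), k ρ * T ρ ξ1) = θ1 * F →
      (∀ ξ ∈ Icc ξ0 ξ1,
        θ1 * F ≤ (∫ ρ in Icc (c - h) (c + h), k ρ * T ρ ξ) ∧
        (∫ ρ in Icc (c - h) (c + h), k ρ * T ρ ξ) ≤ θ4 * F) →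
      -- η₀, the first tangential scale at which the k-average drops to θ₃
      ∀ η0 : ℝ,
      {η : ℝ | 0 < η ∧ (∫ ρ in Icc (c - h) (c + h),
        k ρ * T ρ (ξ0 + η)) = (θ4 - (θ4 - θ1) / 3) * F}.Nonempty →
      η0 = sInf {η : ℝ | 0 < η ∧ (∫ ρ in Icc (c - h) (c + h),
        k ρ * T ρ (ξ0 + η)) = (θ4 - (θ4 - θ1) / 3) * F} →
      -- conclusion
      (κ / (η0 * h)) * |∫ δ in Icc (0 : ℝ) h, ∫ α in Icc (0 : ℝ) η0,
          ∫ ρ in Icc (c - δ) (c + δ),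
            (omg Ea Eb ρ (ξ0 + α))⁻¹ * qXi T ρ (ξ0 + α)| ≤
        C * ((Real.sqrt f0)⁻¹ * (θ4 - θ1)⁻¹ * (min (θ4 - θ1) ζ)⁻¹ *
              (κ / (v0 * h)) *
              (∫ ξ in Icc ξ0 ξ1, ∫ ρ in Icc (c - h) (c + h),
                Ea ρ ξ * Eb ρ ξ *
                  ((v0 ^ 2 / κ) * f (T ρ ξ) + κ * gradSq T Ea Eb ρ ξ)) +
            ((θ4 - θ1) ^ 2)⁻¹ * κ *
              ∫ ξ in Icc ξ0 ξ1, ∫ ρ in Icc (c - h) (c + h),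
                Ea ρ ξ * Eb ρ ξ * gradSq T Ea Eb ρ ξ) := by
  refine ⟨24 * C0 ^ 2 + 1, by positivity, ?_⟩
  intro f θ1 θ4 f0 ζ κ v0 c h ξ0 ξ1 F M Ea Eb q k T hκ hv0 hh hθ1 hθ14 hθ4 hf0 hζ _ _ _ _ hf _
    hT hT01 hEa hEb hE hω _ hM hq hk hF hξ h0 h1 hbr η0 _ hη0
  have hE' : ∀ ρ ∈ Icc (c - h) (c + h), ∀ ξ, 0 < Ea ρ ξ ∧ 0 < Eb ρ ξ := fun ρ hρ ξ =>
    ⟨(inv_pos.2 hC0).trans_le (hE ρ hρ ξ).1, (inv_pos.2 hC0).trans_le (hE ρ hρ ξ).2⟩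
  refine le_add_one_mul_add_of_le_mul (tangential_bound_by_energy (hT.of_le (by norm_num)) hT01
    hEa.continuous hEb.continuous hE' hω hC0 hκ.le hh hθ14 (by linarith) hM hq hk hF hξ h0 h1 hbr
    hη0) (mul_nonneg (by positivity) ?_) (mul_nonneg (by positivity) ?_) (by positivity)
  · refine integral_nonneg fun ξ => setIntegral_nonneg measurableSet_Icc fun ρ hρ => ?_
    exact mul_nonneg (mul_nonneg (hE' ρ hρ ξ).1.le (hE' ρ hρ ξ).2.le)
      (add_nonneg (mul_nonneg (by positivity) (hf _ (hT01 ρ ξ)))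
        (mul_nonneg hκ.le (add_nonneg (sq_nonneg _) (sq_nonneg _))))
  · exact integral_setIntegral_mul_mul_gradSq_nonneg measurableSet_Icc hE'

end
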